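/- arXiv:1903.06412 — 2 statements merged into one kernel-verified Lean document; each statement's English description precedes it below -/
import Mathlib

section
/- Let f : F_q^n → F_q be a k-junta and α ∈ F_q^n with f̂(α) ≠ 0. Let U be uniform on F_q^n and U′ an independent uniform element of F_q. Then max over nonzero a ∈ F_q of |E[e(a·(f(U) − χ_α(U)))]| ≥ 1/q^{k+1}. -/
/-- The additive character `e(a) = exp(2πi·Tr(a)/p)` of a finite field of characteristic `p`. -/
noncomputable def ec (p : ℕ) {F : Type*} [Field F] [Algebra (ZMod p) F] (a : F) : ℂ :=
  Complex.exp (2 * Real.pi * Complex.I * ((Algebra.trace (ZMod p) F a).val : ℂ) / p)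

/-- The linear function `χ_α(x) = Σ_i α_i x_i` over `F_q`. -/
def chi {F : Type*} [Field F] {n : ℕ} (α x : Fin n → F) : F := ∑ i, α i * x i

/-!
Put `ψ = e ∘ Tr`, a primitive additive character of `F`, and `g = f - χ_α`. Translating `x` by
`b` in a coordinate `i` outside the support `S` of the junta multiplies `f̂(α)` by `ψ(-α_i b)`, so
`f̂(α) ≠ 0` forces `α` to vanish off `S`. Then `g` depends only on the coordinates in `S`, so every
fibre count `N_c = #{x | g x = c}` is a multiple of `q^(n-|S|)`. As `f̂(α) ≠ 0`, not all fibres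
have size `q^(n-1)`: for some `c` the integer `q N_c - q^n` is nonzero, hence at least
`q^(n-|S|)` in absolute value. By orthogonality it equals `∑_{a ≠ 0} ψ(-ac) ∑_x ψ(a g(x))`, so one
of these `q - 1` sums has norm at least `q^(n-|S|) / (q - 1) ≥ q^(n-k-1)`.
-/

open Finset

noncomputable def traceAddChar (p : ℕ) [NeZero p] (F : Type*) [Field F] [Algebra (ZMod p) F] :
    AddChar F ℂ :=
  ZMod.stdAddChar.compAddMonoidHom (Algebra.trace (ZMod p) F).toAddMonoidHom

lemma traceAddChar_apply (p : ℕ) [NeZero p] {F : Type*} [Field F] [Algebra (ZMod p) F] (a : F) :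
    traceAddChar p F a = ec p a := by
  simp [traceAddChar, ec, ZMod.stdAddChar_apply, ZMod.toCircle_apply]

lemma isPrimitive_traceAddChar (p : ℕ) [Fact p.Prime] (F : Type*) [Field F] [Fintype F]
    [Algebra (ZMod p) F] : (traceAddChar p F).IsPrimitive := by
  refine AddChar.IsPrimitive.of_ne_one fun h => ?_
  have : CharP F p := charP_of_injective_algebraMap (algebraMap (ZMod p) F).injective p
  obtain rfl : ringChar F = p := ringChar.eq F p
  obtain ⟨b, hb⟩ := FiniteField.trace_to_zmod_nondegenerate F (one_ne_zero (α := F))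
  rw [one_mul] at hb
  refine hb (ZMod.injective_stdAddChar ?_)
  simpa [traceAddChar] using DFunLike.congr_fun h b

lemma chi_eq_dotProduct {F : Type*} [Field F] {n : ℕ} (α x : Fin n → F) : chi α x = α ⬝ᵥ x := rfl

section Fourier

variable {R : Type*} [Fintype R] [DecidableEq R] {X : Type*} [Fintype X]

lemma exists_card_mul_card_fiber_ne [AddGroup R] {ψ : AddChar R ℂ} (hψ : ψ ≠ 1) (g : X → R)
    (hsum : ∑ x, ψ (g x) ≠ 0) : ∃ c, Fintype.card R * #{x | g x = c} ≠ Fintype.card X := by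
  by_contra! hfib
  refine hsum <| (mul_eq_zero.1 ?_).resolve_left <|
    Nat.cast_ne_zero.2 (Fintype.card_ne_zero (α := R))
  calc (Fintype.card R : ℂ) * ∑ x, ψ (g x)
      = ∑ c, ((Fintype.card R * #{x | g x = c} : ℕ) : ℂ) * ψ c := by
        rw [← sum_fiberwise univ g, mul_sum]
        refine sum_congr rfl fun c _ => ?_
        rw [sum_congr rfl fun x hx => by rw [(mem_filter.1 hx).2], sum_const]
        push_cast; ring
    _ = Fintype.card X * ∑ c, ψ c := by simp only [hfib, mul_sum]
    _ = 0 := by rw [AddChar.sum_eq_zero_of_ne_one hψ, mul_zero]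

variable [CommRing R] {ψ : AddChar R ℂ}

lemma sum_addChar_mul_sum_eq_card_mul_card_fiber (hψ : ψ.IsPrimitive) (g : X → R) (c : R) :
    ∑ a, ψ (-(a * c)) * ∑ x, ψ (a * g x) = Fintype.card R * #{x | g x = c} := by
  calc ∑ a, ψ (-(a * c)) * ∑ x, ψ (a * g x)
      = ∑ x, ∑ a, ψ (a * (g x - c)) := by
        rw [sum_comm]
        simp only [mul_sum, sub_eq_neg_add, mul_add, mul_neg, AddChar.map_add_eq_mul]
    _ = ∑ x, if g x = c then (Fintype.card R : ℂ) else 0 := by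
        simp [AddChar.sum_mulShift _ hψ, sub_eq_zero]
    _ = Fintype.card R * #{x | g x = c} := by
        rw [sum_ite, sum_const_zero, add_zero, sum_const, nsmul_eq_mul, mul_comm]

lemma exists_ne_zero_norm_card_mul_card_fiber_sub_le [Nontrivial R] (hψ : ψ.IsPrimitive)
    (g : X → R) (c : R) : ∃ a ≠ 0,
      ‖(Fintype.card R * #{x | g x = c} - Fintype.card X : ℂ)‖ ≤
        (Fintype.card R - 1) * ‖∑ x, ψ (a * g x)‖ := by
  obtain ⟨a, ha, hmax⟩ := exists_max_image (univ.erase 0) (fun a => ‖∑ x, ψ (a * g x)‖)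
    ⟨1, mem_erase.2 ⟨one_ne_zero, mem_univ 1⟩⟩
  refine ⟨a, ne_of_mem_erase ha, ?_⟩
  have hsplit := add_sum_erase univ (fun a => ψ (-(a * c)) * ∑ x, ψ (a * g x)) (mem_univ 0)
  simp only [zero_mul, neg_zero, AddChar.map_zero_eq_one, sum_const, card_univ, one_mul,
    nsmul_eq_mul, mul_one, sum_addChar_mul_sum_eq_card_mul_card_fiber hψ] at hsplit
  calc ‖(Fintype.card R * #{x | g x = c} - Fintype.card X : ℂ)‖
      = ‖∑ b ∈ univ.erase 0, ψ (-(b * c)) * ∑ x, ψ (b * g x)‖ := by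
        rw [← hsplit, add_sub_cancel_left]
    _ ≤ ∑ b ∈ univ.erase 0, ‖∑ x, ψ (b * g x)‖ := by
        refine (norm_sum_le _ _).trans_eq (sum_congr rfl fun b _ => ?_)
        rw [norm_mul, AddChar.norm_apply, one_mul]
    _ ≤ #(univ.erase (0 : R)) • ‖∑ x, ψ (a * g x)‖ := sum_le_card_nsmul _ _ _ hmax
    _ = (Fintype.card R - 1) * ‖∑ x, ψ (a * g x)‖ := by
        rw [card_erase_of_mem (mem_univ _), card_univ, nsmul_eq_mul,
          Nat.cast_sub Fintype.card_pos, Nat.cast_one]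

end Fourier

section Junta

variable {ι : Type*} [DecidableEq ι] {R : Type*}

lemma DependsOn.apply_add_single [AddZeroClass R] {β : Type*} {f : (ι → R) → β} {S : Finset ι}
    (hf : DependsOn f S) {i : ι} (hi : i ∉ S) (x : ι → R) (b : R) :
    f (x + Pi.single i b) = f x :=
  hf fun j hj => by simp [Pi.single_eq_of_ne (ne_of_mem_of_not_mem hj hi)]

lemma dependsOn_dotProduct [Fintype ι] [NonUnitalNonAssocSemiring R] {α : ι → R} {S : Finset ι}
    (hα : ∀ i ∉ S, α i = 0) : DependsOn (α ⬝ᵥ ·) S := fun x y h =>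
  sum_congr rfl fun i _ => by
    by_cases hi : i ∈ S
    · rw [h i hi]
    · simp [hα i hi]

lemma apply_eq_zero_of_sum_addChar_sub_dotProduct_ne_zero [Fintype ι] [Fintype R] [CommRing R]
    {ψ : AddChar R ℂ} (hψ : ψ.IsPrimitive) {f : (ι → R) → R} {S : Finset ι} (hf : DependsOn f S)
    {α : ι → R} (hsum : ∑ x, ψ (f x - α ⬝ᵥ x) ≠ 0) {i : ι} (hi : i ∉ S) : α i = 0 := by
  by_contra hαi
  obtain ⟨b, hb⟩ := AddChar.ne_one_iff.1 (hψ (neg_ne_zero.2 hαi))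
  refine hsum <| eq_zero_of_mul_eq_self_left hb ?_
  let e : ι → R := Pi.single i b
  calc ψ (-α i * b) * ∑ x, ψ (f x - α ⬝ᵥ x)
      = ∑ x, ψ (f (x + e) - α ⬝ᵥ (x + e)) := by
        simp only [e, mul_sum, hf.apply_add_single hi, dotProduct_add, dotProduct_single,
          ← AddChar.map_add_eq_mul]
        exact sum_congr rfl fun x _ => congrArg ψ (by ring)
    _ = ∑ x, ψ (f x - α ⬝ᵥ x) := Equiv.sum_comp (Equiv.addRight e) fun x => ψ (f x - α ⬝ᵥ x)

lemma pow_card_compl_dvd_card_filter [Fintype ι] [Fintype R] [Zero R] {P : (ι → R) → Prop}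
    [DecidablePred P] {S : Finset ι} (hP : DependsOn P S) : Fintype.card R ^ #Sᶜ ∣ #{x | P x} := by
  let E := Equiv.piEquivPiSubtypeProd (· ∈ S) fun _ => R
  let Q : ({i // i ∈ S} → R) → Prop := fun z => P (E.symm (z, 0))
  have hPQ : ∀ x, P x ↔ Q (E x).1 := fun x => by
    refine iff_of_eq (hP fun i hi => ?_)
    simp [E, Equiv.piEquivPiSubtypeProd_symm_apply, mem_coe.1 hi]
  have hcard : Fintype.card {x // P x} = Fintype.card {z // Q z} * Fintype.card R ^ #Sᶜ := by
    rw [Fintype.card_congr ((E.subtypeEquiv hPQ).trans Equiv.prodSubtypeFstEquivSubtypeProd),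
      Fintype.card_prod, Fintype.card_fun]
    simp [card_compl]
  rw [← Fintype.card_subtype, hcard]
  exact dvd_mul_left _ _

end Junta

lemma le_norm_natCast_sub_of_dvd {d m n : ℕ} (hm : d ∣ m) (hn : d ∣ n) (hmn : m ≠ n) :
    (d : ℝ) ≤ ‖(m - n : ℂ)‖ := by
  have hdvd : (d : ℤ) ∣ (m : ℤ) - n := dvd_sub (Int.natCast_dvd_natCast.2 hm)
    (Int.natCast_dvd_natCast.2 hn)
  have hle := Int.natAbs_le_of_dvd_ne_zero hdvd (sub_ne_zero.2 (by exact_mod_cast hmn))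
  rw [show (m - n : ℂ) = ((m - n : ℤ) : ℂ) by push_cast; rfl, Complex.norm_intCast,
    ← Int.cast_abs, ← Int.natCast_natAbs, Int.cast_natCast]
  exact_mod_cast hle

lemma exists_ne_zero_pow_card_compl_le {ι F : Type*} [Fintype ι] [DecidableEq ι] [Field F]
    [Fintype F] [DecidableEq F] {ψ : AddChar F ℂ} (hψ : ψ.IsPrimitive) {g : (ι → F) → F}
    {S : Finset ι} (hg : DependsOn g S) (hsum : ∑ x, ψ (g x) ≠ 0) :
    ∃ a ≠ 0, (Fintype.card F : ℝ) ^ #Sᶜ ≤ (Fintype.card F - 1) * ‖∑ x, ψ (a * g x)‖ := by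
  have hψ1 : ψ ≠ 1 := by simpa using hψ one_ne_zero
  obtain ⟨c, hc⟩ := exists_card_mul_card_fiber_ne hψ1 g hsum
  obtain ⟨a, ha, hle⟩ := exists_ne_zero_norm_card_mul_card_fiber_sub_le hψ g c
  refine ⟨a, ha, le_trans ?_ hle⟩
  have hfiber : Fintype.card F ^ #Sᶜ ∣ Fintype.card F * #{x | g x = c} :=
    dvd_mul_of_dvd_right (pow_card_compl_dvd_card_filter fun x y h => congrArg (· = c) (hg h)) _
  have hcard : Fintype.card F ^ #Sᶜ ∣ Fintype.card (ι → F) := by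
    rw [Fintype.card_fun]
    exact pow_dvd_pow _ (card_le_univ _)
  exact_mod_cast le_norm_natCast_sub_of_dvd hfiber hcard hc

theorem stmt_15_general (p : ℕ) [Fact p.Prime] {F : Type*} [Field F] [Fintype F]
    [Algebra (ZMod p) F] {n k : ℕ}
    (f : (Fin n → F) → F)
    (hjunta : ∃ S : Finset (Fin n), S.card ≤ k ∧
      ∀ x y : Fin n → F, (∀ i ∈ S, x i = y i) → f x = f y)
    (α : Fin n → F)
    (hfc : (∑ x : Fin n → F, ec p (f x - chi α x)) / (Fintype.card (Fin n → F) : ℂ) ≠ 0) :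
    ∃ a : F, a ≠ 0 ∧
      1 / (Fintype.card F : ℝ) ^ (k + 1) ≤
        ‖(∑ x : Fin n → F, ec p (a * (f x - chi α x))) /
          (Fintype.card (Fin n → F) : ℂ)‖ := by
  classical
  obtain ⟨S, hSk, hS⟩ := hjunta
  have hψ := isPrimitive_traceAddChar p F
  simp only [← traceAddChar_apply, chi_eq_dotProduct] at hfc ⊢
  have hsum := left_ne_zero_of_mul hfc
  have hf : DependsOn f S := fun x y h => hS x y h
  have hα := fun i => apply_eq_zero_of_sum_addChar_sub_dotProduct_ne_zero hψ hf hsum (i := i)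
  have hg : DependsOn (fun x => f x - α ⬝ᵥ x) S := fun x y h => by
    simp only [hf h, dependsOn_dotProduct hα h]
  obtain ⟨a, ha, hle⟩ := exists_ne_zero_pow_card_compl_le hψ hg hsum
  refine ⟨a, ha, ?_⟩
  rw [norm_div, Complex.norm_natCast, Fintype.card_fun, Fintype.card_fin, Nat.cast_pow,
    div_le_div_iff₀ (by positivity) (by positivity)]
  set q : ℝ := (Fintype.card F : ℝ)
  have hq : 1 ≤ q := Nat.one_le_cast.2 Fintype.card_pos
  have hn : n = #S + #Sᶜ := by rw [card_add_card_compl, Fintype.card_fin]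
  calc 1 * q ^ n = q ^ #S * q ^ #Sᶜ := by rw [one_mul, ← pow_add, ← hn]
    _ ≤ q ^ k * (q * ‖∑ x, traceAddChar p F (a * (f x - α ⬝ᵥ x))‖) := by
        gcongr
        exact hle.trans (by gcongr; linarith)
    _ = ‖∑ x, traceAddChar p F (a * (f x - α ⬝ᵥ x))‖ * q ^ (k + 1) := by ring

/-- If `f : F_q^n → F_q` is a `k`-junta and `f̂(α) = E[e(f(U) − χ_α(U))] ≠ 0`,
then `max_{a ≠ 0} |E[e(a·(f(U) − χ_α(U)))]| ≥ 1/q^{k+1}` (`U` uniform on `F_q^n`). -/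
theorem stmt_15 (p ℓ : ℕ) [Fact p.Prime] {F : Type*} [Field F] [Fintype F]
    [Algebra (ZMod p) F] (hq : Fintype.card F = p ^ ℓ) {n k : ℕ}
    (f : (Fin n → F) → F)
    (hjunta : ∃ S : Finset (Fin n), S.card ≤ k ∧
      ∀ x y : Fin n → F, (∀ i ∈ S, x i = y i) → f x = f y)
    (α : Fin n → F)
    (hfc : (∑ x : Fin n → F, ec p (f x - chi α x)) / (Fintype.card (Fin n → F) : ℂ) ≠ 0) :
    ∃ a : F, a ≠ 0 ∧
      1 / (Fintype.card F : ℝ) ^ (k + 1) ≤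
        ‖(∑ x : Fin n → F, ec p (a * (f x - chi α x))) /
          (Fintype.card (Fin n → F) : ℂ)‖ :=
  stmt_15_general p f hjunta α hfc
end

section
/- Let (J, J̄) be any partition of [n] and f a randomized function F_q^n → F_q with correlation |E_{x,f}[e(f(x))·conjugate(e(χ_α(x)))]| ≥ ρ for some α ∈ F_q^n. Then there exist a₁, a₂ ∈ F_q such that Pr_{x,f}[f(x) − χ_{α^J}(x) − a₁ = a₂ and χ_{α^{J̄}}(x) = a₂] ≥ 1/q² + ρ/q³. -/
open Finset

noncomputable def traceChar (p : ℕ) [NeZero p] (F : Type*) [Field F] [Algebra (ZMod p) F] :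
    AddChar F ℂ :=
  ZMod.stdAddChar.compAddMonoidHom (Algebra.trace (ZMod p) F).toAddMonoidHom

lemma traceChar_apply (p : ℕ) [NeZero p] {F : Type*} [Field F] [Algebra (ZMod p) F] (a : F) :
    traceChar p F a = ec p a := by
  simp [traceChar, ZMod.stdAddChar_apply, ZMod.toCircle_apply, ec]

lemma traceChar_ne_one (p : ℕ) [Fact p.Prime] (F : Type*) [Field F] [Fintype F]
    [Algebra (ZMod p) F] : traceChar p F ≠ 1 := by
  have : FiniteDimensional (ZMod p) F := Module.Finite.of_finite
  obtain ⟨a, ha⟩ : ∃ a : F, Algebra.trace (ZMod p) F a ≠ 0 := by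
    by_contra! h
    exact Algebra.trace_ne_zero (ZMod p) F (LinearMap.ext h)
  refine AddChar.ne_one_iff.2 ⟨a, fun h => ha ?_⟩
  exact ZMod.injective_stdAddChar (h.trans (AddChar.map_zero_eq_one _).symm)

lemma chi_add_left {F : Type*} [Field F] {n : ℕ} (α β x : Fin n → F) :
    chi (α + β) x = chi α x + chi β x := by
  simp only [chi, Pi.add_apply, add_mul, sum_add_distrib]

lemma sum_abs_le_of_sum_eq_zero {ι : Type*} [Fintype ι] [Nonempty ι] {D : ι → ℝ} {M : ℝ}
    (hD : ∑ i, D i = 0) (hM : ∀ i, D i ≤ M) : ∑ i, |D i| ≤ 2 * Fintype.card ι * M := by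
  obtain ⟨i₀, -, hi₀⟩ := exists_le_of_sum_le (f := 0) (g := D) univ_nonempty (by simp [hD])
  have hM0 : 0 ≤ M := (hi₀ : 0 ≤ D i₀).trans (hM i₀)
  calc ∑ i, |D i| ≤ ∑ i, (2 * M - D i) :=
        sum_le_sum fun i _ => abs_le.2 ⟨by linarith [hM i], by linarith [hM i]⟩
    _ = 2 * Fintype.card ι * M := by simp [sum_sub_distrib, hD, card_univ]; ring

lemma exists_le_of_norm_sum_mul_addChar {G : Type*} [AddGroup G] [Fintype G] {ψ : AddChar G ℂ}
    (hψ : ψ ≠ 1) {P : G → ℝ} (hP : ∑ a, P a = 1) :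
    ∃ a, 1 / Fintype.card G + ‖∑ b, (P b : ℂ) * ψ b‖ / (2 * Fintype.card G) ≤ P a := by
  set q : ℝ := (Fintype.card G : ℝ)
  have hq : 0 < q := by positivity
  obtain ⟨a, -, ha⟩ := exists_max_image univ P univ_nonempty
  refine ⟨a, ?_⟩
  have hcentre : ∑ b, (P b : ℂ) * ψ b = ∑ b, ((P b - 1 / q : ℝ) : ℂ) * ψ b := by
    simp [sub_mul, sum_sub_distrib, ← mul_sum, AddChar.sum_eq_zero_of_ne_one hψ]
  have hnorm : ‖∑ b, (P b : ℂ) * ψ b‖ ≤ 2 * q * (P a - 1 / q) := by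
    rw [hcentre]
    refine (norm_sum_le _ _).trans ?_
    simp only [norm_mul, AddChar.norm_apply, mul_one, Complex.norm_real, Real.norm_eq_abs]
    refine sum_abs_le_of_sum_eq_zero ?_ fun b => by linarith [ha b (mem_univ b)]
    simp [sum_sub_distrib, hP, card_univ, q, hq.ne']
  have := (div_le_iff₀ (by positivity : 0 < 2 * q)).2 (hnorm.trans_eq (mul_comm _ _))
  linarith

section OffsetDist

variable {X F : Type*} [Fintype X] [AddCommGroup F] [Fintype F]

/-- The law of `f(x) - g(x)` for uniform `x`, when `f x` is the law of a random value in `F`. -/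
noncomputable def offsetDist (f : X → F → ℝ) (g : X → F) (a : F) : ℝ :=
  (∑ x, f x (g x + a)) / Fintype.card X

lemma sum_offsetDist [Nonempty X] {f : X → F → ℝ} (hf : ∀ x, ∑ b, f x b = 1) (g : X → F) :
    ∑ a, offsetDist f g a = 1 := by
  have hshift (x : X) : ∑ a, f x (g x + a) = 1 :=
    (Equiv.sum_comp (Equiv.addLeft (g x)) (f x)).trans (hf x)
  simp only [offsetDist, ← sum_div]
  rw [sum_comm]
  simp [hshift, card_univ]

lemma sum_mul_conj_div_card_eq (f : X → F → ℝ) (ψ : AddChar F ℂ) (g : X → F) :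
    (∑ x, ∑ b, (f x b : ℂ) * ψ b * starRingEnd ℂ (ψ (g x))) / Fintype.card X =
      ∑ a, (offsetDist f g a : ℂ) * ψ a := by
  have hshift (x : X) : ∑ b, (f x b : ℂ) * ψ b * starRingEnd ℂ (ψ (g x)) =
      ∑ a, (f x (g x + a) : ℂ) * ψ a := by
    rw [← Equiv.sum_comp (Equiv.addLeft (g x))]
    refine sum_congr rfl fun a _ => ?_
    have hψ : ψ (g x) ≠ 0 := norm_ne_zero_iff.1 (by simp [AddChar.norm_apply])
    simp only [Equiv.coe_addLeft, ← AddChar.inv_apply_eq_conj, AddChar.map_add_eq_mul]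
    field_simp
  simp only [hshift, offsetDist, sum_div]
  rw [sum_comm]
  push_cast
  simp only [sum_mul, div_mul_eq_mul_div]

lemma exists_offsetDist_div_card_le [DecidableEq F] (f : X → F → ℝ) (g₁ g₂ : X → F) (a₁ : F) :
    ∃ a₂, offsetDist f (g₁ + g₂) a₁ / Fintype.card F ≤
      (∑ x, if g₂ x = a₂ then f x (g₁ x + a₁ + a₂) else 0) / Fintype.card X := by
  have hsplit : ∑ a₂, (∑ x, if g₂ x = a₂ then f x (g₁ x + a₁ + a₂) else 0) / Fintype.card X =
      offsetDist f (g₁ + g₂) a₁ := by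
    rw [← sum_div, sum_comm]
    simp only [sum_ite_eq, mem_univ, if_true, offsetDist, Pi.add_apply, add_right_comm]
  obtain ⟨a₂, -, h⟩ := exists_le_of_sum_le (s := univ)
    (f := fun _ => offsetDist f (g₁ + g₂) a₁ / Fintype.card F) univ_nonempty
    (by rw [hsplit]; simp [card_univ, mul_div_cancel₀])
  exact ⟨a₂, h⟩

end OffsetDist

lemma div_sq_le_div_two_mul {q ρ s : ℝ} (hq : 2 ≤ q) (hρs : ρ ≤ s) (hs : 0 ≤ s) :
    ρ / q ^ 2 ≤ s / (2 * q) := by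
  rcases le_or_gt ρ 0 with hρ | hρ
  · exact (div_nonpos_of_nonpos_of_nonneg hρ (sq_nonneg q)).trans (by positivity)
  · calc ρ / q ^ 2 ≤ ρ / (2 * q) := by gcongr; nlinarith
      _ ≤ s / (2 * q) := by gcongr

theorem stmt_19_general (p : ℕ) [Fact p.Prime] {F : Type*} [Field F] [Fintype F] [DecidableEq F]
    [Algebra (ZMod p) F] {n : ℕ}
    (J : Finset (Fin n)) (α : Fin n → F)
    (f : (Fin n → F) → F → ℝ) (hf1 : ∀ x, ∑ b, f x b = 1)
    (ρ : ℝ)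
    (hcor : ρ ≤ ‖((∑ x : Fin n → F, ∑ b : F, (f x b : ℂ) * ec p b *
        (starRingEnd ℂ) (ec p (chi α x))) / (Fintype.card (Fin n → F) : ℂ))‖) :
    ∃ a₁ a₂ : F,
      1 / (Fintype.card F : ℝ) ^ 2 + ρ / (Fintype.card F : ℝ) ^ 3 ≤
        (∑ x : Fin n → F,
          if chi (fun i => if i ∈ J then 0 else α i) x = a₂ then
            f x (chi (fun i => if i ∈ J then α i else 0) x + a₁ + a₂) else 0) /
          (Fintype.card (Fin n → F) : ℝ) := by
  set q : ℝ := (Fintype.card F : ℝ)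
  have hq : 2 ≤ q := Nat.ofNat_le_cast.2 Fintype.one_lt_card
  have hsplit : chi α = chi (fun i => if i ∈ J then α i else 0) +
      chi (fun i => if i ∈ J then 0 else α i) := by
    ext x
    rw [Pi.add_apply, ← chi_add_left]
    congr 1
    ext i
    simp only [Pi.add_apply]
    split_ifs <;> simp
  simp only [← traceChar_apply, sum_mul_conj_div_card_eq] at hcor
  obtain ⟨a₁, ha₁⟩ :=
    exists_le_of_norm_sum_mul_addChar (traceChar_ne_one p F) (sum_offsetDist hf1 (chi α))
  obtain ⟨a₂, ha₂⟩ := exists_offsetDist_div_card_le f _ _ a₁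
  refine ⟨a₁, a₂, le_trans ?_ (hsplit ▸ ha₂)⟩
  calc 1 / q ^ 2 + ρ / q ^ 3 = (1 / q + ρ / q ^ 2) / q := by field_simp
    _ ≤ offsetDist f (chi α) a₁ / q := by
      gcongr
      linarith [div_sq_le_div_two_mul hq hcor (norm_nonneg _)]

/-- Let `(J, J̄)` be any partition of `[n]` and `f` a randomized function
`F_q^n → F_q` (modeled by its conditional distribution `f x : F_q → ℝ` for each input `x`)
with correlation `|E_{x,f}[e(f(x))·conj(e(χ_α(x)))]| ≥ ρ`. Then there exist `a₁, a₂ ∈ F_q`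
such that `Pr_{x,f}[f(x) − χ_{α^J}(x) − a₁ = a₂ ∧ χ_{α^{J̄}}(x) = a₂] ≥ 1/q² + ρ/q³`. -/
theorem stmt_19 (p ℓ : ℕ) [Fact p.Prime] {F : Type*} [Field F] [Fintype F] [DecidableEq F]
    [Algebra (ZMod p) F] (hq : Fintype.card F = p ^ ℓ) {n : ℕ}
    (J : Finset (Fin n)) (α : Fin n → F)
    (f : (Fin n → F) → F → ℝ) (hf0 : ∀ x b, 0 ≤ f x b) (hf1 : ∀ x, ∑ b, f x b = 1)
    (ρ : ℝ)
    (hcor : ρ ≤ ‖((∑ x : Fin n → F, ∑ b : F, (f x b : ℂ) * ec p b *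
        (starRingEnd ℂ) (ec p (chi α x))) / (Fintype.card (Fin n → F) : ℂ))‖) :
    ∃ a₁ a₂ : F,
      1 / (Fintype.card F : ℝ) ^ 2 + ρ / (Fintype.card F : ℝ) ^ 3 ≤
        (∑ x : Fin n → F,
          if chi (fun i => if i ∈ J then 0 else α i) x = a₂ then
            f x (chi (fun i => if i ∈ J then α i else 0) x + a₁ + a₂) else 0) /
          (Fintype.card (Fin n → F) : ℝ) :=
  stmt_19_general p J α f hf1 ρ hcor
end
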